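/- arXiv:2001.10747 — 5 statements merged into one kernel-verified Lean document; each statement's English description precedes it below -/
import Mathlib

section
/- Let R be a commutative ring, S a multiplicative subset of R, R[S⁻¹] the localisation of R at S, and (𝒜, ℬ) a cotorsion pair in Mod-R. If 0 → B → A →(φ) M → 0 is exact with φ an 𝒜-cover of an R[S⁻¹]-module M (so A ∈ 𝒜 and B = Ker φ ∈ ℬ), then A and B carry R[S⁻¹]-module structures making this a short exact sequence of R[S⁻¹]-modules; in particular multiplication by every element of S is an automorphism of A and of B. -/
/-!
If `s ∈ S` acts invertibly on `M`, the precover property lifts `s⁻¹ ∘ φ` to an endomorphism `h`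
of `A` with `φ ∘ (s • h) = φ`; the cover property makes `s • h` an automorphism, and as `s`
commutes with `h`, `s` acts invertibly on `A`. Then `A` is its own localization at `S`, hence an
`R[S⁻¹]`-module, and `φ`, an `R`-linear map between `R[S⁻¹]`-modules, is `R[S⁻¹]`-linear.
On `ker φ`, `s` is injective by restriction and surjective because `M` has no `s`-torsion.
-/

universe u

open MulOpposite Function

/-- `Ext¹_A(X, Y) = 0`: every short exact sequence `0 → Y → E → X → 0` splits. -/
def Ext1Vanishes (A : Type u) [Ring A] (X Y : Type u) [AddCommGroup X] [Module A X]
    [AddCommGroup Y] [Module A Y] : Prop :=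
  ∀ (E : Type u) [AddCommGroup E] [Module A E], ∀ (i : Y →ₗ[A] E) (p : E →ₗ[A] X),
    Function.Injective i → Function.Surjective p → LinearMap.range i = LinearMap.ker p →
    ∃ s : X →ₗ[A] E, p.comp s = LinearMap.id

/-- `φ : P → M` is a `C`-cover of `M`: `P ∈ C`, every map from a module of `C` to `M`
factors through `φ`, and every endomorphism `e` of `P` with `φ ∘ e = φ` is an automorphism. -/
def IsCover (A : Type u) [Ring A] (C : Set (ModuleCat.{u} A)) (P : ModuleCat.{u} A)
    (M : Type u) [AddCommGroup M] [Module A M] (φ : P →ₗ[A] M) : Prop :=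
  P ∈ C ∧
  (∀ P' ∈ C, ∀ ψ : (P' : Type u) →ₗ[A] M, ∃ h : (P' : Type u) →ₗ[A] (P : Type u),
    φ.comp h = ψ) ∧
  (∀ e : (P : Type u) →ₗ[A] (P : Type u), φ.comp e = φ → Function.Bijective e)

/-- The class `C` is covering: every `A`-module admits a `C`-cover. -/
def IsCoveringClass (A : Type u) [Ring A] (C : Set (ModuleCat.{u} A)) : Prop :=
  ∀ M : ModuleCat.{u} A, ∃ (P : ModuleCat.{u} A) (φ : P →ₗ[A] (M : Type u)),
    IsCover A C P (M : Type u) φ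

/-- `A` carries an `R[S⁻¹]`-module structure which is compatible with its `R`-module
structure and makes `φ` an `R[S⁻¹]`-linear map. -/
def HasCompatibleLocalizedStructure (R : Type u) [CommRing R] (S : Submonoid R)
    (A : Type u) [AddCommGroup A] [Module R A]
    (M : Type u) [AddCommGroup M] [Module R M] [Module (Localization S) M]
    [IsScalarTower R (Localization S) M] (φ : A →ₗ[R] M) : Prop :=
  ∃ m : Module (Localization S) A, by
    letI := m
    exact (∀ (r : R) (a : A), (algebraMap R (Localization S) r) • a = r • a) ∧
      (∀ (q : Localization S) (a : A), φ (q • a) = q • φ a)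

theorem IsCover.isUnit_algebraMap_end {R : Type u} [CommRing R] {C : Set (ModuleCat.{u} R)}
    {P : ModuleCat.{u} R} {M : Type u} [AddCommGroup M] [Module R M] {φ : P →ₗ[R] M}
    (hφ : IsCover R C P M φ) {r : R} (hr : IsUnit (algebraMap R (Module.End R M) r)) :
    IsUnit (algebraMap R (Module.End R P) r) := by
  obtain ⟨h, hh⟩ := hφ.2.1 P hφ.1 (↑hr.unit⁻¹ ∘ₗ φ)
  have hfix : φ ∘ₗ (algebraMap R (Module.End R P) r * h) = φ := by
    ext a
    calc φ ((algebraMap R (Module.End R P) r * h) a) = r • φ (h a) := map_smul φ r (h a)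
      _ = r • (↑hr.unit⁻¹ : Module.End R M) (φ a) := by rw [← LinearMap.comp_apply, hh]; rfl
      _ = φ a := LinearMap.congr_fun hr.mul_val_inv (φ a)
  have hunit : IsUnit (algebraMap R (Module.End R P) r * h) :=
    (Module.End.isUnit_iff _).mpr (hφ.2.2 _ hfix)
  exact ((Algebra.commute_algebraMap_left r h).isUnit_mul_iff.mp hunit).1

theorem LinearMap.isUnit_algebraMap_end_ker {R : Type u} [CommRing R] {P M : Type u}
    [AddCommGroup P] [Module R P] [AddCommGroup M] [Module R M] (f : P →ₗ[R] M) {r : R}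
    (hP : IsUnit (algebraMap R (Module.End R P) r)) (hM : Injective (r • · : M → M)) :
    IsUnit (algebraMap R (Module.End R (ker f)) r) := by
  rw [Module.End.isUnit_iff] at hP ⊢
  refine ⟨fun a b hab => Subtype.ext (hP.injective (congrArg Subtype.val hab)), fun ⟨b, hb⟩ => ?_⟩
  obtain ⟨a, rfl⟩ := hP.surjective b
  refine ⟨⟨a, hM ?_⟩, rfl⟩
  show r • f a = r • 0
  rw [smul_zero, ← map_smul]
  exact hb

theorem hasCompatibleLocalizedStructure_of_isUnit {R : Type u} [CommRing R] (S : Submonoid R)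
    {A M : Type u} [AddCommGroup A] [Module R A] [AddCommGroup M] [Module R M]
    [Module (Localization S) M] [IsScalarTower R (Localization S) M] (φ : A →ₗ[R] M)
    (hA : ∀ s : S, IsUnit (algebraMap R (Module.End R A) s)) :
    HasCompatibleLocalizedStructure R S A M φ := by
  have : IsLocalizedModule S (LinearMap.id : A →ₗ[R] A) :=
    ⟨hA, fun a => ⟨(a, 1), one_smul _ _⟩, fun h => ⟨1, congrArg _ h⟩⟩
  let := IsLocalizedModule.module (A := Localization S) S (LinearMap.id : A →ₗ[R] A)
  have := IsLocalizedModule.isScalarTower_module (A := Localization S) S (LinearMap.id : A →ₗ[R] A)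
  exact ⟨_, fun r a => algebraMap_smul _ r a, fun q a => φ.map_smul_of_tower q a⟩

theorem cover_of_localized_module_is_localized_general (R : Type u) [CommRing R] (S : Submonoid R)
    (𝒜 : Set (ModuleCat.{u} R))
    (M : Type u) [AddCommGroup M] [Module R M] [Module (Localization S) M]
    [IsScalarTower R (Localization S) M]
    (A : ModuleCat.{u} R) (φ : (A : Type u) →ₗ[R] M)
    (hcover : IsCover R 𝒜 A M φ) :
    HasCompatibleLocalizedStructure R S (A : Type u) M φ ∧
    (∀ s : S, Function.Bijective (fun a : (A : Type u) => (s : R) • a)) ∧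
    (∀ s : S, Function.Bijective (fun b : LinearMap.ker φ => (s : R) • b)) := by
  have hM (s : S) : IsUnit (algebraMap R (Module.End R M) s) :=
    (isLocalizedModule_id S M (Localization S)).map_units s
  have hA (s : S) : IsUnit (algebraMap R (Module.End R A) s) :=
    hcover.isUnit_algebraMap_end (hM s)
  exact ⟨hasCompatibleLocalizedStructure_of_isUnit S φ hA,
    fun s => (Module.End.isUnit_iff _).mp (hA s),
    fun s => (Module.End.isUnit_iff _).mp
      (φ.isUnit_algebraMap_end_ker (hA s) ((Module.End.isUnit_iff _).mp (hM s)).injective)⟩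

/-- **Corollary 2.4.** Let `R` be commutative, `S` a multiplicative subset, `(𝒜, ℬ)` a
cotorsion pair in `Mod-R`, and `0 → B → A → M → 0` exact with `φ : A → M` an `𝒜`-cover of
an `R[S⁻¹]`-module `M` (so `A ∈ 𝒜` and `B = ker φ ∈ ℬ`). Then `A` and `B` carry
`R[S⁻¹]`-module structures making this a short exact sequence in `Mod-R[S⁻¹]`; in
particular multiplication by every element of `S` is an automorphism of `A` and of `B`. -/
theorem cover_of_localized_module_is_localized (R : Type u) [CommRing R] (S : Submonoid R)
    (𝒜 ℬ : Set (ModuleCat.{u} R))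
    (hA : 𝒜 = {A : ModuleCat.{u} R | ∀ B ∈ ℬ, Ext1Vanishes R (A : Type u) (B : Type u)})
    (hB : ℬ = {B : ModuleCat.{u} R | ∀ A ∈ 𝒜, Ext1Vanishes R (A : Type u) (B : Type u)})
    (M : Type u) [AddCommGroup M] [Module R M] [Module (Localization S) M]
    [IsScalarTower R (Localization S) M]
    (A : ModuleCat.{u} R) (φ : (A : Type u) →ₗ[R] M)
    (hmem : A ∈ 𝒜) (hsurj : Function.Surjective φ)
    (hcover : IsCover R 𝒜 A M φ)
    (hker : ModuleCat.of R (LinearMap.ker φ) ∈ ℬ) :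
    HasCompatibleLocalizedStructure R S (A : Type u) M φ ∧
    (∀ s : S, Function.Bijective (fun a : (A : Type u) => (s : R) • a)) ∧
    (∀ s : S, Function.Bijective (fun b : LinearMap.ker φ => (s : R) • b)) :=
  cover_of_localized_module_is_localized_general R S 𝒜 M A φ hcover
end

section
/- Let R be a ring whose set Σ of regular elements satisfies the left and right Ore conditions, and let Q = R[Σ⁻¹] be its classical ring of quotients. If C is a finitely presented right Q-module of projective dimension at most 1 over Q, then there exist a finitely generated projective right Q-module P and a finitely presented right R-module N of projective dimension at most 1 over R such that C ⊕ P ≅ N ⊗_R Q as right Q-modules. -/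
universe u

open MulOpposite Function

/-- An element of a ring is regular if it is neither a left nor a right zero-divisor. -/
def IsRegularElem (R : Type u) [Ring R] (r : R) : Prop :=
  (∀ x, r * x = 0 → x = 0) ∧ (∀ x, x * r = 0 → x = 0)

/-- The set `Σ` of regular elements of `R` satisfies the left Ore condition. -/
def LeftOreCondition (R : Type u) [Ring R] : Prop :=
  ∀ (r s : R), IsRegularElem R s → ∃ (r' s' : R), IsRegularElem R s' ∧ s' * r = r' * s

/-- The set `Σ` of regular elements of `R` satisfies the right Ore condition. -/
def RightOreCondition (R : Type u) [Ring R] : Prop :=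
  ∀ (r s : R), IsRegularElem R s → ∃ (r' s' : R), IsRegularElem R s' ∧ r * s' = s * r'

/-- `f : R → Q` exhibits `Q` as the classical ring of quotients `R[Σ⁻¹]` of `R`, where
`Σ` is the set of regular elements of `R`: `f` is injective, regular elements become
units, and every element of `Q` is both a right fraction and a left fraction. -/
def IsClassicalRingOfQuotients (R Q : Type u) [Ring R] [Ring Q] (f : R →+* Q) : Prop :=
  Function.Injective f ∧
  (∀ s : R, IsRegularElem R s → IsUnit (f s)) ∧
  (∀ q : Q, ∃ (r s : R), IsRegularElem R s ∧ q * f s = f r) ∧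
  (∀ q : Q, ∃ (r s : R), IsRegularElem R s ∧ f s * q = f r)

/-- `M` is a finitely presented `A`-module. -/
def FinPresMod (A : Type u) [Ring A] (M : Type u) [AddCommGroup M] [Module A M] : Prop :=
  ∃ (n : ℕ) (g : (Fin n → A) →ₗ[A] M), Function.Surjective g ∧ (LinearMap.ker g).FG

/-- An `A`-module `M` has projective dimension at most 1, i.e. there is a short exact
sequence `0 → ker g → P → M → 0` with `P` and `ker g` projective. -/
def ProjDimLE1 (A : Type u) [Ring A] (M : Type u) [AddCommGroup M] [Module A M] : Prop :=
  ∃ (P : ModuleCat.{u} A) (g : P →ₗ[A] M), Module.Projective A P ∧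
    Function.Surjective g ∧ Module.Projective A (LinearMap.ker g)

/-- `ι : N → V` exhibits the right `Q`-module `V` as the base change `N ⊗_R Q` of the
right `R`-module `N` along `f : R → Q` (universal property of extension of scalars). -/
def IsBaseChangeRightMod (R Q : Type u) [Ring R] [Ring Q] (f : R →+* Q)
    (N : Type u) [AddCommGroup N] [Module Rᵐᵒᵖ N]
    (V : Type u) [AddCommGroup V] [Module Qᵐᵒᵖ V] (ι : N →+ V) : Prop :=
  (∀ (r : R) (n : N), ι (op r • n) = op (f r) • ι n) ∧
  ∀ (W : Type u) [AddCommGroup W] [Module Qᵐᵒᵖ W] (g : N →+ W),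
    (∀ (r : R) (n : N), g (op r • n) = op (f r) • g n) →
    ∃! h : V →+ W, (∀ (q : Q) (v : V), h (op q • v) = op q • h v) ∧ h.comp ι = g

section Lincomb
variable {S : Type u} [Ring S] {ι : Type} [Fintype ι] [DecidableEq ι]
  {M : Type u} [AddCommGroup M] [Module S M]

/-- Linear combination map associated to a finite family of vectors. -/
def lincomb (v : ι → M) : (ι → S) →ₗ[S] M where
  toFun z := ∑ i, z i • v i
  map_add' x y := by simp [add_smul, Finset.sum_add_distrib]
  map_smul' r x := by simp [mul_smul, Finset.smul_sum]

@[simp] lemma lincomb_apply (v : ι → M) (z : ι → S) : lincomb v z = ∑ i, z i • v i := rfl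

lemma single_eq_smul (x : ι → S) (i : ι) :
    (Pi.single i (x i) : ι → S) = x i • (Pi.single i (1 : S) : ι → S) := by
  rw [← Pi.single_smul, smul_eq_mul, mul_one]

lemma pi_expand (x : ι → S) : x = ∑ i, x i • (Pi.single i (1 : S) : ι → S) := by
  conv_lhs => rw [← Finset.univ_sum_single x]
  exact Finset.sum_congr rfl fun i _ => single_eq_smul x i

lemma apply_eq_sum (L : (ι → S) →ₗ[S] M) (x : ι → S) :
    L x = ∑ i, x i • L (Pi.single i 1 : ι → S) := by
  conv_lhs => rw [pi_expand x]
  rw [map_sum]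
  refine Finset.sum_congr rfl fun i _ => ?_
  rw [map_smul]

lemma lincomb_single (v : ι → M) (j : ι) : lincomb v (Pi.single j 1 : ι → S) = v j := by
  classical
  simp only [lincomb_apply]
  rw [Finset.sum_eq_single j]
  · rw [Pi.single_eq_same, one_smul]
  · intro b _ hb; rw [Pi.single_eq_of_ne hb, zero_smul]
  · intro h; exact absurd (Finset.mem_univ j) h

lemma lincomb_surjective {v : ι → M} (hv : Submodule.span S (Set.range v) = ⊤) :
    Function.Surjective ⇑(lincomb v : (ι → S) →ₗ[S] M) := by
  rw [← LinearMap.range_eq_top]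
  rw [← top_le_iff, ← hv, Submodule.span_le]
  rintro _ ⟨i, rfl⟩
  exact ⟨(Pi.single i 1 : ι → S), lincomb_single v i⟩
end Lincomb

section Proj

lemma projective_of_equiv {S : Type u} [Ring S] {M N : Type u}
    [AddCommGroup M] [Module S M] [AddCommGroup N] [Module S N]
    (e : M ≃ₗ[S] N) [Module.Projective S M] : Module.Projective S N :=
  Module.Projective.of_split e.symm.toLinearMap e.toLinearMap (by ext x; simp)

/-- Schanuel-type lemma: if `g : F → C` and `p : E → C` are surjections with `F, E`
projective and `ker p` projective, then `ker g` is projective. -/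
lemma ker_projective {S : Type u} [Ring S] {CC F E : Type u}
    [AddCommGroup CC] [Module S CC] [AddCommGroup F] [Module S F]
    [AddCommGroup E] [Module S E]
    [Module.Projective S F] [Module.Projective S E]
    (g : F →ₗ[S] CC) (p : E →ₗ[S] CC) (hg : Surjective g) (hp : Surjective p)
    (hkp : Module.Projective S (LinearMap.ker p)) :
    Module.Projective S (LinearMap.ker g) := by
  classical
  set d : F × E →ₗ[S] CC := g ∘ₗ LinearMap.fst S F E - p ∘ₗ LinearMap.snd S F E with hd
  set X : Submodule S (F × E) := LinearMap.ker d with hX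
  have memX : ∀ v : F × E, v ∈ X ↔ g v.1 = p v.2 := by
    intro v
    simp [hX, hd, LinearMap.mem_ker, sub_eq_zero]
  set π1 : X →ₗ[S] F := LinearMap.fst S F E ∘ₗ X.subtype with hπ1
  set π2 : X →ₗ[S] E := LinearMap.snd S F E ∘ₗ X.subtype with hπ2
  have hπ1s : Surjective π1 := by
    intro a
    obtain ⟨e, he⟩ := hp (g a)
    exact ⟨⟨(a, e), (memX _).2 he.symm⟩, rfl⟩
  have hπ2s : Surjective π2 := by
    intro e
    obtain ⟨a, ha⟩ := hg (p e)
    exact ⟨⟨(a, e), (memX _).2 ha⟩, rfl⟩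
  -- X is projective:
  obtain ⟨σ, hσ⟩ := Module.projective_lifting_property π1 LinearMap.id hπ1s
  have hσ' : ∀ a, π1 (σ a) = a := fun a => congrArg (fun L => L a) hσ
  -- incl : ker p →ₗ X
  have hincl : ∀ k : LinearMap.ker p, ((0, (k : E)) : F × E) ∈ X := by
    intro k; rw [memX]; simp [k.2]
  set incl : (LinearMap.ker p) →ₗ[S] X :=
    LinearMap.codRestrict X (LinearMap.inr S F E ∘ₗ (LinearMap.ker p).subtype) hincl with hincl'
  set fwd : F × (LinearMap.ker p) →ₗ[S] X :=
    σ ∘ₗ LinearMap.fst S F (LinearMap.ker p) + incl ∘ₗ LinearMap.snd S F (LinearMap.ker p)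
    with hfwd
  have hm2 : ∀ x : X, ((x : F × E).2 - ((σ (π1 x) : F × E)).2) ∈ LinearMap.ker p := by
    intro x
    have h1 : g (x : F × E).1 = p (x : F × E).2 := (memX _).1 x.2
    have h2 : g ((σ (π1 x) : F × E)).1 = p ((σ (π1 x) : F × E)).2 := (memX _).1 (σ (π1 x)).2
    have h3 : ((σ (π1 x) : F × E)).1 = (x : F × E).1 := hσ' (π1 x)
    simp only [LinearMap.mem_ker, map_sub]
    rw [← h1, ← h2, h3, sub_self]
  set bwd : X →ₗ[S] F × (LinearMap.ker p) :=
    LinearMap.prod π1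
      (LinearMap.codRestrict (LinearMap.ker p)
        ((LinearMap.snd S F E ∘ₗ X.subtype) - (LinearMap.snd S F E ∘ₗ X.subtype ∘ₗ σ ∘ₗ π1))
        hm2) with hbwd
  have hXproj : Module.Projective S X := by
    have h1 : fwd ∘ₗ bwd = LinearMap.id := by
      apply LinearMap.ext; intro x
      apply Subtype.ext
      apply Prod.ext
      · show ((σ (π1 x) : F × E)).1 + (0 : F) = (x : F × E).1
        rw [add_zero]; exact hσ' (π1 x)
      · show ((σ (π1 x) : F × E)).2 + ((x : F × E).2 - ((σ (π1 x) : F × E)).2) = (x : F × E).2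
        abel
    exact Module.Projective.of_split bwd fwd h1
  -- now split ker g off X
  obtain ⟨τ, hτ⟩ := Module.projective_lifting_property π2 LinearMap.id hπ2s
  have hτ' : ∀ e, π2 (τ e) = e := fun e => congrArg (fun L => L e) hτ
  have hi : ∀ k : LinearMap.ker g, (((k : F), 0) : F × E) ∈ X := by
    intro k; rw [memX]; simp [k.2]
  set i : (LinearMap.ker g) →ₗ[S] X :=
    LinearMap.codRestrict X (LinearMap.inl S F E ∘ₗ (LinearMap.ker g).subtype) hi with hi'
  have hρ : ∀ x : X, ((x : F × E).1 - ((τ (π2 x) : F × E)).1) ∈ LinearMap.ker g := by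
    intro x
    have h1 : g (x : F × E).1 = p (x : F × E).2 := (memX _).1 x.2
    have h2 : g ((τ (π2 x) : F × E)).1 = p ((τ (π2 x) : F × E)).2 := (memX _).1 (τ (π2 x)).2
    have h3 : ((τ (π2 x) : F × E)).2 = (x : F × E).2 := hτ' (π2 x)
    simp only [LinearMap.mem_ker, map_sub]
    rw [h1, h2, h3, sub_self]
  set ρ : X →ₗ[S] LinearMap.ker g :=
    LinearMap.codRestrict (LinearMap.ker g)
      ((LinearMap.fst S F E ∘ₗ X.subtype) - (LinearMap.fst S F E ∘ₗ X.subtype ∘ₗ τ ∘ₗ π2))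
      hρ with hρ'
  have hsplit : ρ ∘ₗ i = LinearMap.id := by
    apply LinearMap.ext; intro k
    have hπ2i : π2 (i k) = 0 := rfl
    apply Subtype.ext
    show ((i k : F × E)).1 - ((τ (π2 (i k)) : F × E)).1 = (k : F)
    rw [hπ2i, map_zero]
    show (k : F) - ((0 : X) : F × E).1 = (k : F)
    simp
  exact Module.Projective.of_split i ρ hsplit

end Proj
section RegAux

variable {R : Type u} [Ring R]

lemma isRegularElem_one : IsRegularElem R 1 :=
  ⟨fun x h => by rwa [one_mul] at h, fun x h => by rwa [mul_one] at h⟩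

lemma isRegularElem_mul {a b : R} (ha : IsRegularElem R a) (hb : IsRegularElem R b) :
    IsRegularElem R (a * b) := by
  constructor
  · intro x h
    rw [mul_assoc] at h
    exact hb.1 x (ha.1 _ h)
  · intro x h
    rw [← mul_assoc] at h
    exact ha.2 x (hb.2 _ h)

lemma common_denom {Q : Type u} [Ring Q] (f : R →+* Q)
    (hfl : ∀ q : Q, ∃ r s, IsRegularElem R s ∧ f s * q = f r)
    {ι : Type} [DecidableEq ι] (t : Finset ι) (qs : ι → Q) :
    ∃ s, IsRegularElem R s ∧ ∀ i ∈ t, ∃ r, f s * qs i = f r := by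
  classical
  induction t using Finset.induction_on with
  | empty => exact ⟨1, isRegularElem_one, by simp⟩
  | @insert a t' ha ih =>
    obtain ⟨s0, hs0, h0⟩ := ih
    obtain ⟨r', s', hs', hq⟩ := hfl (f s0 * qs a)
    refine ⟨s' * s0, isRegularElem_mul hs' hs0, ?_⟩
    intro i hi
    rcases Finset.mem_insert.mp hi with rfl | hi
    · exact ⟨r', by rw [map_mul, mul_assoc, hq]⟩
    · obtain ⟨r, hr⟩ := h0 i hi
      exact ⟨s' * r, by rw [map_mul, mul_assoc, hr, ← map_mul]⟩

lemma prod_expand {S : Type u} [Ring S] {n m : ℕ} (x : (Fin n → S) × (Fin m → S)) :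
    x = ∑ i, x.1 i • (((Pi.single i 1 : Fin n → S), (0 : Fin m → S)) : (Fin n → S) × (Fin m → S))
      + ∑ i, x.2 i • (((0 : Fin n → S), (Pi.single i 1 : Fin m → S)) : (Fin n → S) × (Fin m → S)) := by
  apply Prod.ext
  · simp only [Prod.fst_add, Prod.fst_sum, Prod.smul_fst, smul_zero,
      Finset.sum_const_zero, add_zero]
    exact pi_expand x.1
  · simp only [Prod.snd_add, Prod.snd_sum, Prod.smul_snd, smul_zero,
      Finset.sum_const_zero, zero_add]
    exact pi_expand x.2

end RegAux
set_option maxHeartbeats 2000000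
/-- **Lemma 3.2.** Let `R` be a ring whose set `Σ` of regular elements satisfies the left
and right Ore conditions and let `Q = R[Σ⁻¹]` be its classical ring of quotients. If `C`
is a finitely presented right `Q`-module of projective dimension at most 1, then there
are a finitely generated projective right `Q`-module `P` and a finitely presented right
`R`-module `N` of projective dimension at most 1 with `C ⊕ P ≅ N ⊗_R Q`. -/
theorem fp_pd1_module_over_quotients (R Q : Type u) [Ring R] [Ring Q]
    (hlo : LeftOreCondition R) (hro : RightOreCondition R)
    (f : R →+* Q) (hf : IsClassicalRingOfQuotients R Q f)
    (C : Type u) [AddCommGroup C] [Module Qᵐᵒᵖ C]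
    (hCfp : FinPresMod Qᵐᵒᵖ C) (hCpd : ProjDimLE1 Qᵐᵒᵖ C) :
    ∃ (P : ModuleCat.{u} Qᵐᵒᵖ) (N : ModuleCat.{u} Rᵐᵒᵖ)
      (ι : (N : Type u) →+ C × (P : Type u)),
      Module.Projective Qᵐᵒᵖ (P : Type u) ∧ Module.Finite Qᵐᵒᵖ (P : Type u) ∧
      FinPresMod Rᵐᵒᵖ (N : Type u) ∧ ProjDimLE1 Rᵐᵒᵖ (N : Type u) ∧
      IsBaseChangeRightMod R Q f (N : Type u) (C × (P : Type u)) ι := by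
  classical
  obtain ⟨hfinj, hfunit, hfr, hfl⟩ := hf
  obtain ⟨n, g, hgsurj, hKfg⟩ := hCfp
  obtain ⟨E, p, hEproj, hpsurj, hkerp⟩ := hCpd
  haveI := hEproj
  have hKproj : Module.Projective Qᵐᵒᵖ (LinearMap.ker g) :=
    ker_projective g p hgsurj hpsurj hkerp
  have hKfin : Module.Finite Qᵐᵒᵖ (LinearMap.ker g) := Module.Finite.iff_fg.mpr hKfg
  set K : Submodule Qᵐᵒᵖ (Fin n → Qᵐᵒᵖ) := LinearMap.ker g with hKdef
  obtain ⟨m, vK, hvK⟩ := @Module.Finite.exists_fin Qᵐᵒᵖ K _ _ _ hKfin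
  set w : (Fin m → Qᵐᵒᵖ) →ₗ[Qᵐᵒᵖ] K := lincomb vK with hwdef
  have hwsurj : Function.Surjective w := lincomb_surjective hvK
  obtain ⟨u, hu⟩ := @Module.projective_lifting_property Qᵐᵒᵖ _ K _ _ _ _ _ _ _ _ hKproj
    w LinearMap.id hwsurj
  have hu' : ∀ k, w (u k) = k := fun k => congrArg (fun L => L k) hu
  -- the big presentation of C × K over Q
  set Θ : (Fin n → Qᵐᵒᵖ) × (Fin m → Qᵐᵒᵖ) →ₗ[Qᵐᵒᵖ] C × K :=
    (g ∘ₗ LinearMap.fst Qᵐᵒᵖ _ _).prod (w ∘ₗ LinearMap.snd Qᵐᵒᵖ _ _) with hΘdef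
  set β : (Fin m → Qᵐᵒᵖ) →ₗ[Qᵐᵒᵖ] (Fin n → Qᵐᵒᵖ) × (Fin m → Qᵐᵒᵖ) :=
    (K.subtype ∘ₗ w).prod (LinearMap.id - u ∘ₗ w) with hβdef
  have hΘapp : ∀ x : (Fin n → Qᵐᵒᵖ) × (Fin m → Qᵐᵒᵖ), Θ x = (g x.1, w x.2) := fun _ => rfl
  have hβapp : ∀ z, β z = (((w z : K) : Fin n → Qᵐᵒᵖ), z - u (w z)) := fun _ => rfl
  have hΘβ : ∀ z, Θ (β z) = 0 := by
    intro z
    rw [hΘapp, hβapp]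
    have h1 : g ((w z : K) : Fin n → Qᵐᵒᵖ) = 0 := (w z).2
    have h2 : w (z - u (w z)) = 0 := by rw [map_sub, hu', sub_self]
    rw [h1, h2]; rfl
  have hkerΘ : LinearMap.ker Θ = LinearMap.range β := by
    apply le_antisymm
    · rintro ⟨x, y⟩ hxy
      rw [LinearMap.mem_ker, hΘapp] at hxy
      have h1 : g x = 0 := congrArg Prod.fst hxy
      have h2 : w y = 0 := congrArg Prod.snd hxy
      refine ⟨u ⟨x, h1⟩ + y, ?_⟩
      have hwz : w (u ⟨x, h1⟩ + y) = ⟨x, h1⟩ := by rw [map_add, hu', h2, add_zero]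
      rw [hβapp, hwz]
      apply Prod.ext
      · rfl
      · show u ⟨x, h1⟩ + y - u ⟨x, h1⟩ = y
        abel
    · rintro _ ⟨z, rfl⟩
      exact LinearMap.mem_ker.mpr (hΘβ z)
  have hβinj : Function.Injective β := by
    have : ∀ z, β z = 0 → z = 0 := by
      intro z hz
      rw [hβapp] at hz
      have h1 : ((w z : K) : Fin n → Qᵐᵒᵖ) = 0 := congrArg Prod.fst hz
      have h1' : w z = 0 := Subtype.ext h1
      have h2 : z - u (w z) = 0 := congrArg Prod.snd hz
      rw [h1', map_zero, sub_zero] at h2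
      exact h2
    intro a b hab
    have := this (a - b) (by rw [map_sub, hab, sub_self])
    exact sub_eq_zero.mp this
  have hΘsurj : Function.Surjective Θ := by
    rintro ⟨c0, k⟩
    obtain ⟨x, hx⟩ := hgsurj c0
    exact ⟨(x, u k), by rw [hΘapp]; show (g x, w (u k)) = (c0, k); rw [hx, hu']⟩
  -- clearing denominators
  set vβ : Fin m → (Fin n → Qᵐᵒᵖ) × (Fin m → Qᵐᵒᵖ) :=
    fun j => β (Pi.single j 1 : Fin m → Qᵐᵒᵖ) with hvβdef
  set qs : ((Fin n ⊕ Fin m) × Fin m) → Q := fun x =>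
    Sum.rec (fun i => unop ((vβ x.2).1 i)) (fun i => unop ((vβ x.2).2 i)) x.1 with hqsdef
  obtain ⟨s, hs, hsd⟩ := common_denom f hfl Finset.univ qs
  set c : Qᵐᵒᵖ := op (f s) with hcdef
  have hcu : IsUnit c := (hfunit s hs).op
  obtain ⟨cunit, hcunit⟩ := hcu
  set c' : Qᵐᵒᵖ := ((cunit⁻¹ : Qᵐᵒᵖˣ) : Qᵐᵒᵖ) with hc'def
  have hcc' : c * c' = 1 := by rw [← hcunit]; exact cunit.mul_inv
  have hc'c : c' * c = 1 := by rw [← hcunit]; exact cunit.inv_mul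
  -- numerators
  have hb1ex : ∀ (j : Fin m) (i : Fin n), ∃ r, f s * unop ((vβ j).1 i) = f r :=
    fun j i => hsd ((Sum.inl i, j)) (Finset.mem_univ _)
  have hb2ex : ∀ (j : Fin m) (i : Fin m), ∃ r, f s * unop ((vβ j).2 i) = f r :=
    fun j i => hsd ((Sum.inr i, j)) (Finset.mem_univ _)
  set bb : Fin m → (Fin n → Rᵐᵒᵖ) × (Fin m → Rᵐᵒᵖ) := fun j =>
    (fun i => op (Classical.choose (hb1ex j i)), fun i => op (Classical.choose (hb2ex j i)))
    with hbbdef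
  -- the semilinear "apply f componentwise" map
  set φhat : (Fin n → Rᵐᵒᵖ) × (Fin m → Rᵐᵒᵖ) →ₛₗ[RingHom.op f]
      (Fin n → Qᵐᵒᵖ) × (Fin m → Qᵐᵒᵖ) :=
    { toFun := fun x => (fun i => op (f (unop (x.1 i))), fun i => op (f (unop (x.2 i)))),
      map_add' := fun x y => Prod.ext
        (funext fun i => by
          show op (f (unop ((x + y).1 i))) = op (f (unop (x.1 i))) + op (f (unop (y.1 i)))
          rw [Prod.fst_add, Pi.add_apply, unop_add, map_add, op_add])
        (funext fun i => by
          show op (f (unop ((x + y).2 i))) = op (f (unop (x.2 i))) + op (f (unop (y.2 i)))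
          rw [Prod.snd_add, Pi.add_apply, unop_add, map_add, op_add]),
      map_smul' := fun t x => Prod.ext
        (funext fun i => by
          show op (f (unop ((t • x).1 i))) = op (f (unop t)) * op (f (unop (x.1 i)))
          rw [Prod.smul_fst, Pi.smul_apply, smul_eq_mul, unop_mul, map_mul, op_mul])
        (funext fun i => by
          show op (f (unop ((t • x).2 i))) = op (f (unop t)) * op (f (unop (x.2 i)))
          rw [Prod.smul_snd, Pi.smul_apply, smul_eq_mul, unop_mul, map_mul, op_mul]) }
    with hφhatdef
  have hφhatapp : ∀ x, φhat x =
      ((fun i => op (f (unop (x.1 i)))), (fun i => op (f (unop (x.2 i))))) := fun _ => rfl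
  -- right multiplication by c as a linear auto-equivalence
  set rcl : (Fin n → Qᵐᵒᵖ) × (Fin m → Qᵐᵒᵖ) →ₗ[Qᵐᵒᵖ] (Fin n → Qᵐᵒᵖ) × (Fin m → Qᵐᵒᵖ) :=
    { toFun := fun x => (fun i => x.1 i * c, fun i => x.2 i * c),
      map_add' := fun x y => Prod.ext
        (funext fun i => add_mul (x.1 i) (y.1 i) c)
        (funext fun i => add_mul (x.2 i) (y.2 i) c),
      map_smul' := fun t x => Prod.ext
        (funext fun i => mul_assoc t (x.1 i) c)
        (funext fun i => mul_assoc t (x.2 i) c) } with hrcldef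
  set rcl' : (Fin n → Qᵐᵒᵖ) × (Fin m → Qᵐᵒᵖ) →ₗ[Qᵐᵒᵖ] (Fin n → Qᵐᵒᵖ) × (Fin m → Qᵐᵒᵖ) :=
    { toFun := fun x => (fun i => x.1 i * c', fun i => x.2 i * c'),
      map_add' := fun x y => Prod.ext
        (funext fun i => add_mul (x.1 i) (y.1 i) c')
        (funext fun i => add_mul (x.2 i) (y.2 i) c'),
      map_smul' := fun t x => Prod.ext
        (funext fun i => mul_assoc t (x.1 i) c')
        (funext fun i => mul_assoc t (x.2 i) c') } with hrcl'def
  have hinv1 : ∀ x, rcl (rcl' x) = x := by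
    intro x
    refine Prod.ext (funext fun i => ?_) (funext fun i => ?_)
    · show (x.1 i * c') * c = x.1 i
      rw [mul_assoc, hc'c, mul_one]
    · show (x.2 i * c') * c = x.2 i
      rw [mul_assoc, hc'c, mul_one]
  have hinv2 : ∀ x, rcl' (rcl x) = x := by
    intro x
    refine Prod.ext (funext fun i => ?_) (funext fun i => ?_)
    · show (x.1 i * c) * c' = x.1 i
      rw [mul_assoc, hcc', mul_one]
    · show (x.2 i * c) * c' = x.2 i
      rw [mul_assoc, hcc', mul_one]
  have hrcapp : ∀ x, rcl x = (fun i => x.1 i * c, fun i => x.2 i * c) := fun _ => rfl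
  have hkey : ∀ j, φhat (bb j) = rcl (vβ j) := by
    intro j
    rw [hφhatapp, hrcapp]
    apply Prod.ext <;> funext i
    · show op (f (unop ((bb j).1 i))) = (vβ j).1 i * c
      have h1 := Classical.choose_spec (hb1ex j i)
      show op (f (unop (op (Classical.choose (hb1ex j i))))) = _
      rw [unop_op, ← h1, op_mul, op_unop]
    · show op (f (unop (op (Classical.choose (hb2ex j i))))) = (vβ j).2 i * c
      have h1 := Classical.choose_spec (hb2ex j i)
      rw [unop_op, ← h1, op_mul, op_unop]
  set B : (Fin m → Qᵐᵒᵖ) →ₗ[Qᵐᵒᵖ] (Fin n → Qᵐᵒᵖ) × (Fin m → Qᵐᵒᵖ) :=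
    rcl ∘ₗ β with hBdef
  have hBapp : ∀ z, B z = rcl (β z) := fun _ => rfl
  have hBsingle : ∀ j, B (Pi.single j 1 : Fin m → Qᵐᵒᵖ) = φhat (bb j) := by
    intro j; rw [hBapp, hkey j]
  set γ : (Fin m → Rᵐᵒᵖ) →ₗ[Rᵐᵒᵖ] (Fin n → Rᵐᵒᵖ) × (Fin m → Rᵐᵒᵖ) := lincomb bb with hγdef
  have hγsingle : ∀ j, γ (Pi.single j 1 : Fin m → Rᵐᵒᵖ) = bb j := fun j => lincomb_single bb j
  have hcompat : ∀ z, φhat (γ z) = B (fun j => (RingHom.op f) (z j)) := by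
    intro z
    have h1 : γ z = ∑ j, z j • bb j := rfl
    rw [h1, map_sum]
    have h2 : ∀ j, φhat (z j • bb j) = (RingHom.op f) (z j) • B (Pi.single j 1 : Fin m → Qᵐᵒᵖ) := by
      intro j
      rw [φhat.map_smulₛₗ, hBsingle j]
    calc (∑ j, φhat (z j • bb j))
        = ∑ j, (RingHom.op f) (z j) • B (Pi.single j 1 : Fin m → Qᵐᵒᵖ) :=
          Finset.sum_congr rfl fun j _ => h2 j
      _ = B (∑ j, (RingHom.op f) (z j) • (Pi.single j 1 : Fin m → Qᵐᵒᵖ)) := by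
          rw [map_sum]
          exact Finset.sum_congr rfl fun j _ => (B.map_smul _ _).symm
      _ = B (fun j => (RingHom.op f) (z j)) := by rw [← pi_expand]
  have hγinj : Function.Injective γ := by
    have : ∀ z, γ z = 0 → z = 0 := by
      intro z hz
      have h1 : φhat (γ z) = 0 := by rw [hz, map_zero]
      rw [hcompat] at h1
      have h2 : rcl (β (fun j => (RingHom.op f) (z j))) = 0 := h1
      have h3 : β (fun j => (RingHom.op f) (z j)) = 0 := by
        have := congrArg rcl' h2
        rwa [hinv2, map_zero] at this
      have h4 : (fun j => (RingHom.op f) (z j)) = (0 : Fin m → Qᵐᵒᵖ) := by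
        apply hβinj
        rw [h3, map_zero]
      funext j
      have h5 : op (f (unop (z j))) = (0 : Qᵐᵒᵖ) := congrFun h4 j
      have h6 : f (unop (z j)) = 0 := by
        have := congrArg unop h5; simpa using this
      have h7 : unop (z j) = 0 := hfinj (by rwa [map_zero])
      have := congrArg op h7; simpa using this
    intro a b hab
    have := this (a - b) (by rw [map_sub, hab, sub_self])
    exact sub_eq_zero.mp this
  -- the R-module N
  set ν : ((Fin n → Rᵐᵒᵖ) × (Fin m → Rᵐᵒᵖ)) →ₗ[Rᵐᵒᵖ]
      (((Fin n → Rᵐᵒᵖ) × (Fin m → Rᵐᵒᵖ)) ⧸ LinearMap.range γ) :=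
    (LinearMap.range γ).mkQ with hνdef
  have hνsurj : Function.Surjective ν := Submodule.mkQ_surjective _
  -- Θ' and exactness
  set Θ' : (Fin n → Qᵐᵒᵖ) × (Fin m → Qᵐᵒᵖ) →ₗ[Qᵐᵒᵖ] C × K :=
    Θ ∘ₗ rcl' with hΘ'def
  have hΘ'app : ∀ x, Θ' x = Θ (rcl' x) := fun _ => rfl
  have hΘ'surj : Function.Surjective Θ' := by
    intro v
    obtain ⟨x, hx⟩ := hΘsurj v
    exact ⟨rcl x, by rw [hΘ'app, hinv2, hx]⟩
  have hkerΘ' : LinearMap.ker Θ' = LinearMap.range B := by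
    ext x
    rw [LinearMap.mem_ker, hΘ'app]
    constructor
    · intro hx
      have : rcl' x ∈ LinearMap.ker Θ := LinearMap.mem_ker.mpr hx
      rw [hkerΘ] at this
      obtain ⟨z, hz⟩ := this
      exact ⟨z, by rw [hBapp, hz, hinv1]⟩
    · rintro ⟨z, rfl⟩
      rw [hBapp, hinv2]
      exact hΘβ z
  -- the map ι
  set j0 : ((Fin n → Rᵐᵒᵖ) × (Fin m → Rᵐᵒᵖ)) →ₛₗ[RingHom.op f] C × K :=
    Θ'.comp φhat with hj0def
  have hkill : LinearMap.range γ ≤ LinearMap.ker j0 := by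
    rintro _ ⟨z, rfl⟩
    rw [LinearMap.mem_ker]
    show Θ' (φhat (γ z)) = 0
    rw [hcompat z]
    show Θ (rcl' (rcl (β _))) = 0
    rw [hinv2]
    exact hΘβ _
  set ιsl : (((Fin n → Rᵐᵒᵖ) × (Fin m → Rᵐᵒᵖ)) ⧸ LinearMap.range γ) →ₛₗ[RingHom.op f] C × K :=
    (LinearMap.range γ).liftQ j0 hkill with hιdef
  have hcompι : ∀ x, ιsl (ν x) = Θ' (φhat x) := fun x => rfl
  refine ⟨ModuleCat.of Qᵐᵒᵖ K, ModuleCat.of Rᵐᵒᵖ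
      (((Fin n → Rᵐᵒᵖ) × (Fin m → Rᵐᵒᵖ)) ⧸ LinearMap.range γ),
    ιsl.toAddMonoidHom, hKproj, hKfin, ?_, ?_, ?_⟩
  · -- FinPresMod
    set e : (Fin (n + m) → Rᵐᵒᵖ) ≃ₗ[Rᵐᵒᵖ] (Fin n → Rᵐᵒᵖ) × (Fin m → Rᵐᵒᵖ) :=
      (LinearEquiv.funCongrLeft Rᵐᵒᵖ Rᵐᵒᵖ finSumFinEquiv).trans
        (LinearEquiv.sumArrowLequivProdArrow _ _ Rᵐᵒᵖ Rᵐᵒᵖ) with hedef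
    refine ⟨n + m, ν ∘ₗ (e : _ →ₗ[Rᵐᵒᵖ] _), hνsurj.comp e.surjective, ?_⟩
    rw [LinearMap.ker_comp, Submodule.ker_mkQ, Submodule.comap_equiv_eq_map_symm]
    apply Submodule.FG.map
    rw [LinearMap.range_eq_map]
    exact Submodule.FG.map _ (Module.Finite.fg_top (R := Rᵐᵒᵖ) (M := Fin m → Rᵐᵒᵖ))
  · -- ProjDimLE1
    refine ⟨ModuleCat.of Rᵐᵒᵖ ((Fin n → Rᵐᵒᵖ) × (Fin m → Rᵐᵒᵖ)), ν,
      (inferInstance : Module.Projective Rᵐᵒᵖ ((Fin n → Rᵐᵒᵖ) × (Fin m → Rᵐᵒᵖ))),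
      hνsurj, ?_⟩
    have hk : LinearMap.ker ν = LinearMap.range γ := Submodule.ker_mkQ _
    rw [hk]
    exact projective_of_equiv (LinearEquiv.ofInjective γ hγinj)
  · -- base change
    constructor
    · intro r nn
      exact ιsl.map_smulₛₗ (op r) nn
    · intro W _W1 _W2 gt hgt
      have hgt' : ∀ (t : Rᵐᵒᵖ) (nn), gt (t • nn) = (RingHom.op f) t • gt nn := by
        intro t nn
        have h := hgt (unop t) nn
        rwa [op_unop] at h
      set w1 : Fin n → W := fun i => gt (ν ((Pi.single i 1 : Fin n → Rᵐᵒᵖ), 0)) with hw1def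
      set w2 : Fin m → W := fun i => gt (ν (0, (Pi.single i 1 : Fin m → Rᵐᵒᵖ))) with hw2def
      have hw1 : ∀ i, gt (ν ((Pi.single i 1 : Fin n → Rᵐᵒᵖ), 0)) = w1 i := fun _ => rfl
      have hw2 : ∀ i, gt (ν (0, (Pi.single i 1 : Fin m → Rᵐᵒᵖ))) = w2 i := fun _ => rfl
      set H : (Fin n → Qᵐᵒᵖ) × (Fin m → Qᵐᵒᵖ) →ₗ[Qᵐᵒᵖ] W :=
        lincomb w1 ∘ₗ LinearMap.fst Qᵐᵒᵖ _ _ + lincomb w2 ∘ₗ LinearMap.snd Qᵐᵒᵖ _ _ with hHdef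
      have hHφ : ∀ x, H (φhat x) = gt (ν x) := by
        intro x
        have hL : H (φhat x) = (∑ i, (RingHom.op f) (x.1 i) • w1 i)
            + ∑ i, (RingHom.op f) (x.2 i) • w2 i := rfl
        have e1 : ν x = (∑ i, x.1 i • ν ((Pi.single i 1 : Fin n → Rᵐᵒᵖ), 0))
            + ∑ i, x.2 i • ν (0, (Pi.single i 1 : Fin m → Rᵐᵒᵖ)) := by
          conv_lhs => rw [prod_expand x]
          rw [map_add, map_sum, map_sum]
          simp_rw [map_smul]
        have hR : gt (ν x) = (∑ i, (RingHom.op f) (x.1 i) • w1 i)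
            + ∑ i, (RingHom.op f) (x.2 i) • w2 i := by
          rw [e1, map_add, map_sum, map_sum]
          simp_rw [hgt']
          rfl
        exact hL.trans hR.symm
      have hHB : ∀ z, H (B z) = 0 := by
        intro z
        have h1 : H (B z) = ∑ j, z j • H (B (Pi.single j 1 : Fin m → Qᵐᵒᵖ)) := by
          rw [apply_eq_sum B z, map_sum]
          exact Finset.sum_congr rfl fun j _ => H.map_smul _ _
        rw [h1]
        refine Finset.sum_eq_zero fun j _ => ?_
        rw [hBsingle j, hHφ (bb j)]
        have h2 : ν (bb j) = 0 := by
          rw [← hγsingle j]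
          exact (Submodule.Quotient.mk_eq_zero _).mpr (LinearMap.mem_range.mpr ⟨_, rfl⟩)
        rw [h2, map_zero, smul_zero]
      have hle : LinearMap.ker Θ' ≤ LinearMap.ker H := by
        rw [hkerΘ']
        rintro _ ⟨z, rfl⟩
        exact LinearMap.mem_ker.mpr (hHB z)
      set eΘ' := LinearMap.quotKerEquivOfSurjective Θ' hΘ'surj with heΘ'def
      set h0 : C × K →ₗ[Qᵐᵒᵖ] W :=
        ((LinearMap.ker Θ').liftQ H hle) ∘ₗ (eΘ'.symm : _ →ₗ[Qᵐᵒᵖ] _) with hh0def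
      have hh0 : ∀ x, h0 (Θ' x) = H x := by
        intro x
        have h1 : eΘ'.symm (Θ' x) = Submodule.Quotient.mk x := by
          apply eΘ'.injective
          rw [eΘ'.apply_symm_apply]
          rfl
        show ((LinearMap.ker Θ').liftQ H hle) (eΘ'.symm (Θ' x)) = H x
        rw [h1]
        rfl
      have hcomp0 : h0.toAddMonoidHom.comp ιsl.toAddMonoidHom = gt := by
        apply AddMonoidHom.ext; intro nn
        obtain ⟨x, rfl⟩ := hνsurj nn
        show h0 (ιsl (ν x)) = gt (ν x)
        rw [hcompι, hh0, hHφ]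
      have hδ1 : ∀ i : Fin n, φhat ((Pi.single i 1 : Fin n → Rᵐᵒᵖ), 0)
          = ((Pi.single i 1 : Fin n → Qᵐᵒᵖ), 0) := by
        intro i
        rw [hφhatapp]
        refine Prod.ext (funext fun k => ?_) (funext fun k => ?_)
        · show op (f (unop ((Pi.single i 1 : Fin n → Rᵐᵒᵖ) k))) = (Pi.single i 1 : Fin n → Qᵐᵒᵖ) k
          rcases eq_or_ne k i with rfl | h
          · rw [Pi.single_eq_same, Pi.single_eq_same, unop_one, map_one, op_one]
          · rw [Pi.single_eq_of_ne h, Pi.single_eq_of_ne h, unop_zero, map_zero, op_zero]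
        · show op (f (unop (0 : Rᵐᵒᵖ))) = (0 : Qᵐᵒᵖ)
          rw [unop_zero, map_zero, op_zero]
      have hδ2 : ∀ i : Fin m, φhat (0, (Pi.single i 1 : Fin m → Rᵐᵒᵖ))
          = (0, (Pi.single i 1 : Fin m → Qᵐᵒᵖ)) := by
        intro i
        rw [hφhatapp]
        refine Prod.ext (funext fun k => ?_) (funext fun k => ?_)
        · show op (f (unop (0 : Rᵐᵒᵖ))) = (0 : Qᵐᵒᵖ)
          rw [unop_zero, map_zero, op_zero]
        · show op (f (unop ((Pi.single i 1 : Fin m → Rᵐᵒᵖ) k))) = (Pi.single i 1 : Fin m → Qᵐᵒᵖ) k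
          rcases eq_or_ne k i with rfl | h
          · rw [Pi.single_eq_same, Pi.single_eq_same, unop_one, map_one, op_one]
          · rw [Pi.single_eq_of_ne h, Pi.single_eq_of_ne h, unop_zero, map_zero, op_zero]
      have hclosed : ∀ (ψ : (C × K) →+ W),
          (∀ (q : Q) (v : C × K), ψ (op q • v) = op q • ψ v) →
          ψ.comp ιsl.toAddMonoidHom = gt →
          ∀ x : (Fin n → Qᵐᵒᵖ) × (Fin m → Qᵐᵒᵖ),
            ψ (Θ' x) = (∑ i, x.1 i • w1 i) + ∑ i, x.2 i • w2 i := by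
        intro ψ hψs hψc x
        have hψs' : ∀ (sq : Qᵐᵒᵖ) (v : C × K), ψ (sq • v) = sq • ψ v := by
          intro sq v
          have h := hψs (unop sq) v
          rwa [op_unop] at h
        have h1 : Θ' x = (∑ i, x.1 i • Θ' ((Pi.single i 1 : Fin n → Qᵐᵒᵖ), 0))
            + ∑ i, x.2 i • Θ' (0, (Pi.single i 1 : Fin m → Qᵐᵒᵖ)) := by
          conv_lhs => rw [prod_expand x]
          rw [map_add, map_sum, map_sum]
          simp_rw [map_smul]
        have h2 : ∀ i : Fin n, ψ (Θ' ((Pi.single i 1 : Fin n → Qᵐᵒᵖ), 0)) = w1 i := by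
          intro i
          have h3 : Θ' ((Pi.single i 1 : Fin n → Qᵐᵒᵖ), 0)
              = ιsl (ν ((Pi.single i 1 : Fin n → Rᵐᵒᵖ), 0)) := by
            rw [hcompι, hδ1]
          rw [h3]
          exact DFunLike.congr_fun hψc (ν ((Pi.single i 1 : Fin n → Rᵐᵒᵖ), 0))
        have h2' : ∀ i : Fin m, ψ (Θ' (0, (Pi.single i 1 : Fin m → Qᵐᵒᵖ))) = w2 i := by
          intro i
          have h3 : Θ' (0, (Pi.single i 1 : Fin m → Qᵐᵒᵖ))
              = ιsl (ν (0, (Pi.single i 1 : Fin m → Rᵐᵒᵖ))) := by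
            rw [hcompι, hδ2]
          rw [h3]
          exact DFunLike.congr_fun hψc (ν (0, (Pi.single i 1 : Fin m → Rᵐᵒᵖ)))
        rw [h1, ψ.map_add, map_sum ψ _ _, map_sum ψ _ _]
        simp_rw [hψs', h2, h2']
      refine ⟨h0.toAddMonoidHom, ⟨?_, hcomp0⟩, ?_⟩
      · intro q v
        exact h0.map_smul (op q) v
      · rintro h' ⟨h's, h'c⟩
        have e1 := hclosed h' h's h'c
        have e2 := hclosed h0.toAddMonoidHom (fun q v => h0.map_smul (op q) v) hcomp0
        apply AddMonoidHom.ext; intro v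
        obtain ⟨x, rfl⟩ := hΘ'surj v
        exact (e1 x).trans (e2 x).symm
end

section
/- Let R be a commutative ring. If every regular prime ideal of R is finitely generated, then every regular ideal of R is finitely generated. -/
universe u

open MulOpposite Function

/-!
Regularity of an ideal is inherited by larger ideals, and both `I ⊔ (a)` and `I : (a)` contain
`I`. Hence "regular implies finitely generated" is an Oka predicate, because "finitely generated"
is one, and an ideal maximal among the regular ideals that are not finitely generated is prime.
Such an ideal exists by Zorn's lemma, since a finitely generated union of a chain of ideals is a
member of the chain.
-/

theorem Submodule.sSup_mem_of_directedOn_of_fg {R M : Type*} [Semiring R] [AddCommMonoid M]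
    [Module R M] {C : Set (Submodule R M)} (hne : C.Nonempty) (hdir : DirectedOn (· ≤ ·) C)
    (hfg : (sSup C).FG) : sSup C ∈ C := by
  obtain ⟨N, hN, hle⟩ := (CompleteLattice.isCompactElement_iff_le_of_directed_sSup_le _ _).1
    ((fg_iff_compact _).1 hfg) C hne hdir le_rfl
  exact le_antisymm (le_sSup hN) hle ▸ hN

theorem Ideal.IsOka.imp_of_monotone {R : Type*} [CommSemiring R] {P Q : Ideal R → Prop}
    (hP : IsOka P) (hQ : Monotone Q) : IsOka (fun I ↦ Q I → P I) where
  top _ := hP.top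
  oka hsup hcolon hI := hP.oka (hsup (hQ le_sup_left hI)) (hcolon (hQ le_colon hI))

/-- **Proposition 4.1.** Let `R` be a commutative ring. If every regular prime ideal of
`R` is finitely generated, then every regular ideal of `R` is finitely generated. -/
theorem regular_ideals_fg_of_regular_primes_fg (R : Type u) [CommRing R]
    (h : ∀ P : Ideal R, P.IsPrime → (∃ r ∈ P, r ∈ nonZeroDivisors R) → P.FG) :
    ∀ I : Ideal R, (∃ r ∈ I, r ∈ nonZeroDivisors R) → I.FG := by
  have hregular : Monotone fun I : Ideal R ↦ ∃ r ∈ I, r ∈ nonZeroDivisors R :=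
    fun _ _ hle ⟨r, hr, hreg⟩ ↦ ⟨r, hle hr, hreg⟩
  refine (Ideal.isOka_fg.imp_of_monotone hregular).forall_of_forall_prime' ?_ h
  intro C hC hchain I hI hsSup
  have hfg : (sSup C).FG := hsSup (hregular (le_sSup hI) (Classical.not_imp.1 (hC hI)).1)
  exact ⟨sSup C, Submodule.sSup_mem_of_directedOn_of_fg ⟨I, hI⟩ hchain.directedOn hfg, hsSup⟩
end

section
/- Let R be a reduced commutative ring whose total ring of quotients Q has Krull dimension 0. Then an ideal I of R is contained in a minimal prime ideal of R if and only if I is not regular (i.e. I contains no non-zero-divisor). -/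
universe u

/-! Elements of a minimal prime are zero divisors. Conversely, an ideal missing the regular
elements extends to a proper ideal of `Q`; a maximal ideal above it is a minimal prime because
`dim Q = 0`, and minimal primes of a localization contract to minimal primes. -/

namespace IsLocalization

variable {R : Type*} [CommSemiring R] (S : Submonoid R) (A : Type*) [CommSemiring A]
  [Algebra R A]

theorem under_mem_minimalPrimes [IsLocalization S A] {p : Ideal A} (hp : p ∈ minimalPrimes A) :
    p.under R ∈ minimalPrimes R := by
  have hmap := minimalPrimes_map S A (⊥ : Ideal R)
  rw [Ideal.map_bot] at hmap
  exact hmap.subset hp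

theorem exists_minimalPrimes_le_of_disjoint [IsLocalization S A] [Ring.KrullDimLE 0 A]
    {I : Ideal R} (hI : Disjoint (S : Set R) I) : ∃ p ∈ minimalPrimes R, I ≤ p := by
  obtain ⟨m, hm, hIm⟩ :=
    Ideal.exists_le_maximal _ ((map_algebraMap_ne_top_iff_disjoint S A I).mpr hI)
  have hm_min : m ∈ minimalPrimes A := Ideal.mem_minimalPrimes_iff_isPrime.mpr hm.isPrime
  exact ⟨m.under R, under_mem_minimalPrimes S A hm_min, Ideal.map_le_iff_le_comap.mp hIm⟩

end IsLocalization

theorem le_minimal_prime_iff_not_regular_general (R : Type u) [CommRing R]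
    (Q : Type u) [CommRing Q] [Algebra R Q] [IsFractionRing R Q]
    (hdim : ringKrullDim Q = 0) (I : Ideal R) :
    (∃ p ∈ minimalPrimes R, I ≤ p) ↔ ¬(∃ r ∈ I, r ∈ nonZeroDivisors R) := by
  have : Ring.KrullDimLE 0 Q := Ring.krullDimLE_iff.mpr hdim.le
  constructor
  · rintro ⟨p, hp, hIp⟩ ⟨r, hrI, hr⟩
    exact notMem_nonZeroDivisors_of_mem_mem_minimalPrimes (hIp hrI) hp hr
  · intro hI
    exact IsLocalization.exists_minimalPrimes_le_of_disjoint (nonZeroDivisors R) Q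
      (Set.disjoint_left.mpr fun r hr hrI ↦ hI ⟨r, hrI, hr⟩)

/-- **Lemma 4.2.** Let `R` be a reduced commutative ring whose total ring of quotients
`Q` has Krull dimension `0`. An ideal `I` of `R` is contained in a minimal prime ideal
of `R` if and only if `I` is not regular. -/
theorem le_minimal_prime_iff_not_regular (R : Type u) [CommRing R] [IsReduced R]
    (Q : Type u) [CommRing Q] [Algebra R Q] [IsFractionRing R Q]
    (hdim : ringKrullDim Q = 0) (I : Ideal R) :
    (∃ p ∈ minimalPrimes R, I ≤ p) ↔ ¬(∃ r ∈ I, r ∈ nonZeroDivisors R) :=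
  le_minimal_prime_iff_not_regular_general R Q hdim I
end

section
/- Let R be a commutative Von Neumann regular ring. Then the class 𝒫₁(R) is covering if and only if R is hereditary (equivalently, every ideal of R is projective). -/
universe u

open MulOpposite Function

/-- The class `𝒫₁(A)` of modules of projective dimension at most one. -/
def P1Class (A : Type u) [Ring A] : Set (ModuleCat.{u} A) := {M | ProjDimLE1 A M}

/-! If every ideal is projective, quotients of injective modules are injective (Baer), so for
`K ≤ F` with `F` projective every map `K → E ⧸ N` with `E` injective lifts to `E`; this makes
submodules of projectives projective, every module lies in `𝒫₁`, and identities are covers.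

Conversely let `φ : P → R ⧸ I` be a `𝒫₁`-cover. Each `a ∈ I` is `(a x) a` with `a x` an
idempotent of `I`, and multiplication by `1 - a x` is an endomorphism of `P` over `R ⧸ I`, hence
an automorphism: so `I` kills `P`. Then the lift of `R → R ⧸ I` through `φ` factors over `R ⧸ I`
and splits `φ`, so `φ` is an isomorphism and `R ⧸ I ∈ 𝒫₁`. Schanuel's lemma, applied to
`0 → I → R → R ⧸ I → 0`, makes `I` projective. -/

section Ring

variable {A : Type u} [Ring A] {C : Set (ModuleCat.{u} A)}

theorem projective_ker_of_projective_ker {P P' M : Type u} [AddCommGroup P] [Module A P]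
    [AddCommGroup P'] [Module A P'] [AddCommGroup M] [Module A M] [Module.Projective A P]
    [Module.Projective A P'] {g : P →ₗ[A] M} {g' : P' →ₗ[A] M} (hg : Surjective g)
    (hg' : Surjective g') [Module.Projective A (LinearMap.ker g)] : Module.Projective A (LinearMap.ker g') := by
  obtain ⟨t, ht⟩ := Module.projective_lifting_property g' g hg'
  obtain ⟨t', ht'⟩ := Module.projective_lifting_property g g' hg
  replace ht : ∀ p, g' (t p) = g p := LinearMap.congr_fun ht
  replace ht' : ∀ p', g (t' p') = g' p' := LinearMap.congr_fun ht'
  -- `k ↦ (-t' k, k)` and `(k, p') ↦ p' - t (k + t' p')` pass through the pullback of `g` and `g'`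
  have hu : ∀ k : LinearMap.ker g', -t' k ∈ LinearMap.ker g := fun k => by
    simp [ht', LinearMap.mem_ker.mp k.2]
  have hv : ∀ z : LinearMap.ker g × P', z.2 - t (z.1 + t' z.2) ∈ LinearMap.ker g' := fun z => by
    simp [ht, ht', LinearMap.mem_ker.mp z.1.2]
  let u : LinearMap.ker g' →ₗ[A] LinearMap.ker g × P' :=
    ((-t' ∘ₗ (LinearMap.ker g').subtype).codRestrict _ hu).prod (LinearMap.ker g').subtype
  let v : LinearMap.ker g × P' →ₗ[A] LinearMap.ker g' :=
    (LinearMap.snd A _ P' - t ∘ₗ ((LinearMap.ker g).subtype ∘ₗ LinearMap.fst A _ P' +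
      t' ∘ₗ LinearMap.snd A _ P')).codRestrict _ hv
  refine Module.Projective.of_split u v (LinearMap.ext fun k => Subtype.ext ?_)
  change (k : P') - t (-t' k + t' k) = k
  rw [neg_add_cancel, map_zero, sub_zero]

theorem ProjDimLE1.of_projective {M : Type u} [AddCommGroup M] [Module A M]
    [Module.Projective A M] : ProjDimLE1 A M :=
  ⟨ModuleCat.of A M, LinearMap.id, ‹_›, surjective_id, by
    rw [LinearMap.ker_id]; infer_instance⟩

theorem ProjDimLE1.of_linearEquiv {M N : Type u} [AddCommGroup M] [Module A M]
    [AddCommGroup N] [Module A N] (h : ProjDimLE1 A M) (e : M ≃ₗ[A] N) :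
    ProjDimLE1 A N := by
  obtain ⟨P, g, hP, hg, hK⟩ := h
  exact ⟨P, e ∘ₗ g, hP, e.surjective.comp hg, by rwa [LinearEquiv.ker_comp]⟩

theorem ProjDimLE1.projective_ker_of_surjective {M P : Type u} [AddCommGroup M] [Module A M]
    [AddCommGroup P] [Module A P] [Module.Projective A P] (h : ProjDimLE1 A M) {g : P →ₗ[A] M} (hg : Surjective g) : Module.Projective A (LinearMap.ker g) := by
  obtain ⟨Q, g₀, hQ, hg₀, hK⟩ := h
  exact projective_ker_of_projective_ker hg₀ hg

theorem Submodule.exists_mkQ_comp_eq_of_injective_quotient {F Q : Type u} [AddCommGroup F]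
    [Module A F] [Module.Projective A F] [AddCommGroup Q] [Module A Q] (K : Submodule A F)
    (N : Submodule A Q) [Module.Injective A (Q ⧸ N)] (f : K →ₗ[A] Q ⧸ N) :
    ∃ g : K →ₗ[A] Q, N.mkQ ∘ₗ g = f := by
  obtain ⟨H, hH⟩ := Module.Injective.out K.subtype K.injective_subtype f
  obtain ⟨G, hG⟩ := Module.projective_lifting_property N.mkQ H N.mkQ_surjective
  exact ⟨G ∘ₗ K.subtype, LinearMap.ext fun k => (LinearMap.congr_fun hG k).trans (hH k)⟩

variable (A) in
theorem exists_embedding_into_injective_module (X : Type u) [AddCommGroup X] [Module A X] :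
    ∃ (E : ModuleCat.{u} A) (ι : X →ₗ[A] E), Module.Injective A E ∧ Injective ι :=
  ⟨CategoryTheory.Injective.under (ModuleCat.of A X),
    (CategoryTheory.Injective.ι (ModuleCat.of A X)).hom,
    Module.injective_module_of_injective_object A _
      (inj := CategoryTheory.Injective.injective_under _),
    (ModuleCat.mono_iff_injective _).mp inferInstance⟩

theorem isCover_id {M : ModuleCat.{u} A} (hM : M ∈ C) : IsCover A C M M LinearMap.id :=
  ⟨hM, fun _ _ ψ => ⟨ψ, LinearMap.id_comp ψ⟩,
    fun e he => by rw [LinearMap.id_comp] at he; exact he ▸ bijective_id⟩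

theorem isCoveringClass_of_forall_mem (hC : ∀ M, M ∈ C) : IsCoveringClass A C :=
  fun M => ⟨M, LinearMap.id, isCover_id (hC M)⟩

theorem IsCover.bijective_of_comp_eq_id {P : ModuleCat.{u} A} {M : Type u} [AddCommGroup M]
    [Module A M] {φ : P →ₗ[A] M} (hφ : IsCover A C P M φ) {s : M →ₗ[A] P}
    (hs : φ ∘ₗ s = LinearMap.id) : Bijective φ := by
  have hsφ : Bijective (s ∘ₗ φ) :=
    hφ.2.2 _ (by rw [← LinearMap.comp_assoc, hs, LinearMap.id_comp])
  exact ⟨.of_comp hsφ.injective, RightInverse.surjective (LinearMap.congr_fun hs)⟩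

end Ring

theorem IsCover.smul_eq_zero_of_isIdempotentElem {R : Type u} [CommRing R]
    {C : Set (ModuleCat.{u} R)} {P : ModuleCat.{u} R} {M : Type u} [AddCommGroup M] [Module R M]
    {φ : P →ₗ[R] M} (hφ : IsCover R C P M φ) {e : R} (he : IsIdempotentElem e)
    (heM : ∀ m : M, e • m = 0) (x : P) : e • x = 0 := by
  have hbij : Bijective ((1 - e) • LinearMap.id : P →ₗ[R] P) :=
    hφ.2.2 _ <| LinearMap.ext fun y => by simp [sub_smul, heM]
  apply hbij.injective
  rw [map_zero, LinearMap.smul_apply, LinearMap.id_apply, smul_smul, sub_mul, one_mul, he.eq,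
    sub_self, zero_smul]

section Hereditary

variable {R : Type u} [Ring R] (hR : ∀ I : Ideal R, Module.Projective R I)
include hR

theorem injective_quotient_of_forall_projective_ideal {E : Type u} [AddCommGroup E] [Module R E]
    [Module.Injective R E] (N : Submodule R E) : Module.Injective R (E ⧸ N) := by
  refine Module.Baer.injective fun I f => ?_
  obtain ⟨g, hg⟩ := Module.projective_lifting_property N.mkQ f N.mkQ_surjective
  obtain ⟨G, hG⟩ := Module.Injective.out I.subtype I.injective_subtype g
  exact ⟨N.mkQ ∘ₗ G, fun x hx => by rw [← hg]; exact congrArg N.mkQ (hG ⟨x, hx⟩)⟩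

theorem projective_submodule_of_forall_projective_ideal {F : Type u} [AddCommGroup F]
    [Module R F] [Module.Projective R F] (K : Submodule R F) : Module.Projective R K := by
  refine Module.Projective.of_lifting_property'' fun θ hθ => ?_
  obtain ⟨E, ι, hE, hι⟩ := exists_embedding_into_injective_module R (K →₀ R)
  set N := (LinearMap.ker θ).map ι
  have := injective_quotient_of_forall_projective_ideal hR N
  let j : K →ₗ[R] E ⧸ N := (LinearMap.ker θ).mapQ N ι (Submodule.le_comap_map _ _) ∘ₗ
    (θ.quotKerEquivOfSurjective hθ).symm
  -- a lift of `j` to `E` lands in `ι (K →₀ R)`, where it is a section of `θ`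
  obtain ⟨g, hg⟩ := K.exists_mkQ_comp_eq_of_injective_quotient N j
  have hgθ : ∀ x, g (θ x) - ι x ∈ N := fun x => by
    rw [← Submodule.Quotient.eq, ← N.mkQ_apply, ← LinearMap.comp_apply, hg]
    simp [j, LinearMap.quotKerEquivOfSurjective_symm_apply]
  have hg_range : ∀ k, g k ∈ LinearMap.range ι := hθ.forall.mpr fun x => by
    simpa using add_mem (LinearMap.map_le_range (hgθ x)) (LinearMap.mem_range_self ι x)
  let s := (LinearEquiv.ofInjective ι hι).symm.toLinearMap ∘ₗ g.codRestrict _ hg_range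
  refine ⟨s, LinearMap.ext <| hθ.forall.mpr fun x => ?_⟩
  have hsx : s (θ x) - x ∈ LinearMap.ker θ := by
    rw [← Submodule.comap_map_eq_of_injective hι (LinearMap.ker θ)]
    simpa [s, N] using hgθ x
  simpa [sub_eq_zero] using hsx

theorem projDimLE1_of_forall_projective_ideal (M : Type u) [AddCommGroup M] [Module R M] :
    ProjDimLE1 R M :=
  ⟨ModuleCat.of R (M →₀ R), Finsupp.linearCombination R id,
    inferInstanceAs (Module.Projective R (M →₀ R)),
    Finsupp.linearCombination_surjective R surjective_id,
    projective_submodule_of_forall_projective_ideal hR _⟩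

end Hereditary

section VonNeumannRegular

variable {R : Type u} [CommRing R] (hvnr : ∀ a : R, ∃ x : R, a * x * a = a)
include hvnr

theorem bijective_of_isCover_quotient {I : Ideal R} {P : ModuleCat.{u} R}
    {φ : P →ₗ[R] R ⧸ I} (hφ : IsCover R (P1Class R) P (R ⧸ I) φ) : Bijective φ := by
  have hIP : ∀ a ∈ I, ∀ p : P, a • p = 0 := fun a ha p => by
    obtain ⟨x, hx⟩ := hvnr a
    have he : IsIdempotentElem (a * x) := by
      rw [IsIdempotentElem, ← mul_assoc, hx]
    have heI : ∀ m : R ⧸ I, (a * x) • m = 0 := I.mkQ_surjective.forall.mpr fun r => by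
      rw [← map_smul, Submodule.mkQ_apply, Submodule.Quotient.mk_eq_zero, smul_eq_mul]
      exact I.mul_mem_right r (I.mul_mem_right x ha)
    rw [← hx, mul_smul, hφ.smul_eq_zero_of_isIdempotentElem he heI]
  obtain ⟨t, ht⟩ := hφ.2.1 (ModuleCat.of R R) ProjDimLE1.of_projective I.mkQ
  let s : R ⧸ I →ₗ[R] P := I.liftQ t fun a ha => by
    rw [LinearMap.mem_ker, ← mul_one a, ← smul_eq_mul, map_smul, hIP a ha]
  exact hφ.bijective_of_comp_eq_id (s := s) (Submodule.linearMap_qext _ ht)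

theorem projective_ideal_of_isCoveringClass (hcov : IsCoveringClass R (P1Class R))
    (I : Ideal R) : Module.Projective R I := by
  obtain ⟨P, φ, hφ⟩ := hcov (ModuleCat.of R (R ⧸ I))
  have hP1 : ProjDimLE1 R (R ⧸ I) :=
    hφ.1.of_linearEquiv (LinearEquiv.ofBijective φ (bijective_of_isCover_quotient hvnr hφ))
  exact I.ker_mkQ ▸ hP1.projective_ker_of_surjective I.mkQ_surjective

end VonNeumannRegular

/-- **Proposition 6.3.** Let `R` be a commutative Von Neumann regular ring. Then
`𝒫₁(R)` is covering if and only if `R` is hereditary (every ideal is projective). -/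
theorem vnr_P1_covering_iff_hereditary (R : Type u) [CommRing R]
    (hvnr : ∀ a : R, ∃ x : R, a * x * a = a) :
    IsCoveringClass R (P1Class R) ↔ (∀ I : Ideal R, Module.Projective R I) :=
  ⟨projective_ideal_of_isCoveringClass hvnr, fun hR =>
    isCoveringClass_of_forall_mem fun M => projDimLE1_of_forall_projective_ideal hR M⟩
end
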